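/- (Cloning) For every natural number N ≥ 1, every real p ≥ 1, every nonzero vector c ∈ ℝ^N with coefficients sorted in ascending order 0 ≤ c_1 ≤ … ≤ c_N, and every natural number M ≥ 1, the Generalised Differential Sparsity of the MN-dimensional vector obtained by concatenating M copies of c equals that of c: S_p(c‖c‖…‖c) = S_p(c). -/

import Mathlib

/-!
Since `|c j - c i| ^ p` is symmetric and vanishes on the diagonal (`p ≠ 0`), the sum over pairs
`i < j` is half the sum over all ordered pairs. For the `M`-fold repetition of `c` that full sum
is `M²` times the one for `c`, while `N · ∑ c_i ^ p` becomes `M N · M ∑ c_i ^ p`, so the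
quotient does not change.
-/

open Finset

/-- Generalised Differential Sparsity of order `p`, in its permutation-invariant
form `S_p(c) = (1/(N · Σ_i c_i^p)) · Σ_{i<j} |c_j − c_i|^p`, which agrees with the
sorted-coefficients formula when `c` is sorted in ascending order. -/
noncomputable def gds (N : ℕ) (p : ℝ) (c : Fin N → ℝ) : ℝ :=
  (1 / (N * ∑ i, c i ^ p)) *
    ∑ i : Fin N, ∑ j : Fin N, if i < j then |c j - c i| ^ p else 0

theorem Fin.sum_comp_modNat {R : Type*} [AddCommMonoid R] {m n : ℕ} (g : Fin n → R) :
    ∑ i : Fin (m * n), g i.modNat = m • ∑ j, g j := by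
  have hmod (x : Fin m × Fin n) : (finProdFinEquiv x).modNat = x.2 :=
    congrArg Prod.snd (finProdFinEquiv.symm_apply_apply x)
  simp only [← finProdFinEquiv.sum_comp, hmod, Fintype.sum_prod_type, Finset.sum_const,
    Finset.card_univ, Fintype.card_fin]

theorem Fin.sum_sum_comp_modNat {R : Type*} [AddCommMonoid R] {m n : ℕ} (F : Fin n → Fin n → R) :
    ∑ i : Fin (m * n), ∑ j : Fin (m * n), F i.modNat j.modNat = (m * m) • ∑ i, ∑ j, F i j := by
  simp_rw [Fin.sum_comp_modNat (F _)]
  rw [Fin.sum_comp_modNat fun i => m • ∑ j, F i j, ← Finset.smul_sum, smul_smul]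

theorem Finset.sum_sum_eq_two_nsmul_sum_sum_ite_lt {ι R : Type*} [Fintype ι] [LinearOrder ι]
    [AddCommMonoid R] (F : ι → ι → R) (hsymm : ∀ i j, F i j = F j i) (hdiag : ∀ i, F i i = 0) :
    ∑ i, ∑ j, F i j = 2 • ∑ i, ∑ j, if i < j then F i j else 0 := by
  have hlt_gt : ∑ i, ∑ j, (if j < i then F i j else 0) = ∑ i, ∑ j, if i < j then F i j else 0 := by
    rw [Finset.sum_comm]
    exact Finset.sum_congr rfl fun i _ => Finset.sum_congr rfl fun j _ => by rw [hsymm]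
  rw [two_nsmul]
  nth_rw 2 [← hlt_gt]
  simp_rw [← Finset.sum_add_distrib]
  refine Finset.sum_congr rfl fun i _ => Finset.sum_congr rfl fun j _ => ?_
  rcases lt_trichotomy i j with h | rfl | h
  · simp [h, h.not_gt]
  · simp [hdiag]
  · simp [h, h.not_gt]

theorem gds_eq_div {N : ℕ} {p : ℝ} (hp : p ≠ 0) (c : Fin N → ℝ) :
    gds N p c = (∑ i, ∑ j, |c j - c i| ^ p) / (2 * N * ∑ i, c i ^ p) := by
  rw [Finset.sum_sum_eq_two_nsmul_sum_sum_ite_lt (fun i j => |c j - c i| ^ p)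
    (fun i j => by rw [abs_sub_comm]) (fun i => by simp [Real.zero_rpow hp]), gds, nsmul_eq_mul]
  ring

theorem gds_cloning_general (N : ℕ) (hN : 1 ≤ N) (p : ℝ) (hp : 1 ≤ p)
    (c : Fin N → ℝ)
    (M : ℕ) (hM : 1 ≤ M) :
    gds (M * N) p (fun i : Fin (M * N) => c ⟨(i : ℕ) % N, Nat.mod_lt _ hN⟩)
      = gds N p c := by
  have hp0 : p ≠ 0 := by positivity
  have hM0 : (M : ℝ) ≠ 0 := by positivity
  change gds (M * N) p (Fin.repeat M c) = gds N p c
  rw [gds_eq_div hp0, gds_eq_div hp0]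
  simp only [Fin.repeat_apply, Fin.sum_comp_modNat (fun j => c j ^ p),
    Fin.sum_sum_comp_modNat (fun i j => |c j - c i| ^ p), nsmul_eq_mul, Nat.cast_mul]
  conv_rhs => rw [← mul_div_mul_left _ _ (mul_ne_zero hM0 hM0)]
  ring

theorem gds_cloning (N : ℕ) (hN : 1 ≤ N) (p : ℝ) (hp : 1 ≤ p)
    (c : Fin N → ℝ) (hc0 : ∀ i, 0 ≤ c i) (hmono : Monotone c) (hne : c ≠ 0)
    (M : ℕ) (hM : 1 ≤ M) :
    gds (M * N) p (fun i : Fin (M * N) => c ⟨(i : ℕ) % N, Nat.mod_lt _ hN⟩)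
      = gds N p c :=
  gds_cloning_general N hN p hp c M hM
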